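/- Let K be a field and S = K[x_1, ..., x_n]. Every squarefree monomial ideal I ⊆ S admits a squarefree Stanley decomposition, i.e., I = ⊕_{i=1}^r u_i K[Z_i] as K-vector spaces, where each u_i is a squarefree monomial, each Z_i ⊆ {x_1, ..., x_n}, and supp(u_i) ⊆ Z_i for every i. -/

import Mathlib

/-!
A squarefree monomial ideal `I` is spanned by the monomials it contains, and whether `x^d ∈ I`
depends only on `supp d`, since a squarefree generator divides `x^d` exactly when its support
lies in `supp d`. Grouping the monomials of `I` by their support `A` therefore writes `I` as the
direct sum of the spaces spanned by the monomials with support exactly `A`, and that space is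
the squarefree Stanley space `x_A K[A]`, where `x_A = ∏_{i ∈ A} x_i`.
-/

open MvPolynomial

/-- The Stanley space `u K[Z]`: the `K`-span of all monomials `u * v` where `v` is a
monomial in the variables of `Z`; the monomial `u` is given by its exponent vector `d`. -/
noncomputable def stanleySpace (K : Type*) [Field K] {σ : Type*} (d : σ →₀ ℕ)
    (Z : Finset σ) : Submodule K (MvPolynomial σ K) :=
  Submodule.span K
    {m | ∃ e : σ →₀ ℕ, (e.support : Set σ) ⊆ (Z : Set σ) ∧ m = monomial (d + e) (1 : K)}

/-- A monomial ideal: an ideal generated by monomials. -/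
def IsMonomialIdeal {K : Type*} [Field K] {σ : Type*}
    (I : Ideal (MvPolynomial σ K)) : Prop :=
  ∃ G : Set (σ →₀ ℕ), I = Ideal.span ((fun d => monomial d (1 : K)) '' G)

/-- A squarefree monomial ideal: an ideal generated by squarefree monomials. -/
def IsSquarefreeMonomialIdeal {K : Type*} [Field K] {σ : Type*}
    (I : Ideal (MvPolynomial σ K)) : Prop :=
  ∃ G : Set (σ →₀ ℕ), (∀ d ∈ G, ∀ i, d i ≤ 1) ∧
    I = Ideal.span ((fun d => monomial d (1 : K)) '' G)

/-- `I^c`: the `K`-span of all monomials not belonging to `I`. -/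
noncomputable def compSpan (K : Type*) [Field K] {σ : Type*}
    (I : Ideal (MvPolynomial σ K)) : Submodule K (MvPolynomial σ K) :=
  Submodule.span K
    {m | ∃ d : σ →₀ ℕ, monomial d (1 : K) ∉ I ∧ m = monomial d (1 : K)}

/-- `x_n^k V ⊆ S`: the image in `S = K[x_1,…,x_n]` of a `K`-subspace
`V ⊆ S' = K[x_1,…,x_{n-1}]` under inclusion followed by multiplication by `x_n^k`. -/
noncomputable def shiftUp (K : Type*) [Field K] (n : ℕ) (k : ℕ)
    (V : Submodule K (MvPolynomial (Fin n) K)) :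
    Submodule K (MvPolynomial (Fin (n + 1)) K) :=
  (V.map (rename (Fin.castSucc : Fin n → Fin (n + 1)) :
      MvPolynomial (Fin n) K →ₐ[K] MvPolynomial (Fin (n + 1)) K).toLinearMap).map
    (LinearMap.mulLeft K ((X (Fin.last n) : MvPolynomial (Fin (n + 1)) K) ^ k))

section Exponents

variable {σ : Type*}

lemma le_iff_support_subset_of_forall_le_one {g d : σ →₀ ℕ} (hg : ∀ i, g i ≤ 1) :
    g ≤ d ↔ g.support ⊆ d.support := by
  refine ⟨Finsupp.support_mono, fun h i => ?_⟩
  by_cases hi : i ∈ g.support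
  · exact (hg i).trans (Nat.one_le_iff_ne_zero.2 (Finsupp.mem_support_iff.1 (h hi)))
  · simp [Finsupp.notMem_support_iff.1 hi]

variable [DecidableEq σ]

noncomputable def squarefreeExponent (A : Finset σ) : σ →₀ ℕ :=
  Multiset.toFinsupp A.val

lemma squarefreeExponent_apply (A : Finset σ) (i : σ) :
    squarefreeExponent A i = if i ∈ A then 1 else 0 :=
  Multiset.count_eq_of_nodup A.nodup

lemma squarefreeExponent_le_one (A : Finset σ) (i : σ) : squarefreeExponent A i ≤ 1 := by
  rw [squarefreeExponent_apply]
  split_ifs <;> omega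

@[simp]
lemma support_squarefreeExponent (A : Finset σ) : (squarefreeExponent A).support = A :=
  Finset.val_toFinset A

lemma squarefreeExponent_le_iff {A : Finset σ} {d : σ →₀ ℕ} :
    squarefreeExponent A ≤ d ↔ A ⊆ d.support := by
  rw [le_iff_support_subset_of_forall_le_one (squarefreeExponent_le_one A),
    support_squarefreeExponent]

end Exponents

section RestrictSupport

variable {R σ : Type*} [CommSemiring R]

lemma disjoint_restrictSupport {s t : Set (σ →₀ ℕ)} (h : Disjoint s t) :
    Disjoint (restrictSupport R s) (restrictSupport R t) := by
  rw [Submodule.disjoint_def]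
  intro p hs ht
  simp only [mem_restrictSupport_iff] at hs ht
  rw [← support_eq_empty, ← Finset.coe_eq_empty, ← Set.subset_empty_iff]
  exact (Set.subset_inter hs ht).trans h.le_bot

lemma iSupIndep_restrictSupport {ι : Type*} {s : ι → Set (σ →₀ ℕ)}
    (hs : Pairwise fun i j => Disjoint (s i) (s j)) :
    iSupIndep fun i => restrictSupport R (s i) := by
  intro i
  have hle : ⨆ (j) (_ : j ≠ i), restrictSupport R (s j) ≤
      restrictSupport R (⋃ (j) (_ : j ≠ i), s j) :=
    iSup₂_le fun j hj => restrictSupport_mono R (Set.subset_biUnion_of_mem (u := s) hj)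
  exact (disjoint_restrictSupport
    (Set.disjoint_iUnion₂_right.2 fun j hj => hs hj.symm)).mono_right hle

lemma iSup_restrictSupport {ι : Type*} (s : ι → Set (σ →₀ ℕ)) :
    ⨆ i, restrictSupport R (s i) = restrictSupport R (⋃ i, s i) := by
  simp only [restrictSupport_eq_span, Set.image_iUnion, Submodule.span_iUnion]

lemma restrictScalars_span_monomial (G : Set (σ →₀ ℕ)) :
    (Ideal.span ((fun d => monomial d (1 : R)) '' G)).restrictScalars R =
      restrictSupport R {d | ∃ g ∈ G, g ≤ d} := by
  ext p
  rw [Submodule.restrictScalars_mem, mem_ideal_span_monomial_image, mem_restrictSupport_iff]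
  rfl

end RestrictSupport

section Stanley

variable {K σ : Type*} [Field K] [DecidableEq σ]

lemma stanleySpace_squarefreeExponent (A : Finset σ) :
    stanleySpace K (squarefreeExponent A) A = restrictSupport K {d | d.support = A} := by
  rw [stanleySpace, restrictSupport_eq_span]
  congr 1
  ext m
  constructor
  · rintro ⟨e, he, rfl⟩
    refine ⟨_, ?_, rfl⟩
    rw [Set.mem_ofPred_eq, Finsupp.support_add_eq_union, support_squarefreeExponent]
    exact Finset.union_eq_left.2 (Finset.coe_subset.1 he)
  · rintro ⟨d, rfl, rfl⟩
    refine ⟨d - squarefreeExponent d.support, Finset.coe_subset.2 Finsupp.support_tsub, ?_⟩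
    rw [add_tsub_cancel_of_le (squarefreeExponent_le_iff.2 subset_rfl)]

lemma restrictScalars_span_squarefree_monomial {G : Set (σ →₀ ℕ)}
    (hG : ∀ g ∈ G, ∀ i, g i ≤ 1) :
    (Ideal.span ((fun d => monomial d (1 : K)) '' G)).restrictScalars K =
      ⨆ A : {A : Finset σ // ∃ g ∈ G, g.support ⊆ A},
        stanleySpace K (squarefreeExponent A.1) A.1 := by
  simp only [stanleySpace_squarefreeExponent, iSup_restrictSupport, restrictScalars_span_monomial]
  congr 1
  ext d
  simp only [Set.mem_ofPred_eq, Set.mem_iUnion, Subtype.exists, exists_prop, exists_eq_right']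
  exact exists_congr fun g => and_congr_right fun hg =>
    le_iff_support_subset_of_forall_le_one (hG g hg)

lemma iSupIndep_stanleySpace_squarefreeExponent :
    iSupIndep fun A : Finset σ => stanleySpace K (squarefreeExponent A) A := by
  simp only [stanleySpace_squarefreeExponent]
  refine iSupIndep_restrictSupport fun A B hAB => Set.disjoint_left.2 ?_
  rintro d rfl rfl
  exact hAB rfl

end Stanley

/-- Every squarefree monomial ideal `I ⊆ S = K[x_1,…,x_n]` admits a
squarefree Stanley decomposition `I = ⊕_{i=1}^r u_i K[Z_i]`: each `u_i` is a squarefree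
monomial, `Z_i ⊆ {x_1,…,x_n}` and `supp(u_i) ⊆ Z_i`. -/
theorem squarefreeMonomialIdeal_has_squarefree_stanley_decomposition
    (K : Type*) [Field K] (n : ℕ)
    (I : Ideal (MvPolynomial (Fin n) K)) (hI : IsSquarefreeMonomialIdeal I) :
    ∃ (r : ℕ) (u : Fin r → (Fin n →₀ ℕ)) (Z : Fin r → Finset (Fin n)),
      (∀ i, (∀ j, u i j ≤ 1) ∧ (u i).support ⊆ Z i) ∧
      iSupIndep (fun i => stanleySpace K (u i) (Z i)) ∧
      (⨆ i, stanleySpace K (u i) (Z i)) = Submodule.restrictScalars K I := by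
  obtain ⟨G, hG, rfl⟩ := hI
  obtain ⟨r, ⟨e⟩⟩ :=
    Finite.exists_equiv_fin {A : Finset (Fin n) // ∃ g ∈ G, g.support ⊆ A}
  refine ⟨r, fun i => squarefreeExponent (e.symm i).1, fun i => (e.symm i).1,
    fun i => ⟨squarefreeExponent_le_one _, (support_squarefreeExponent _).le⟩, ?_, ?_⟩
  · exact iSupIndep_stanleySpace_squarefreeExponent.comp
      (Subtype.val_injective.comp e.symm.injective)
  · rw [restrictScalars_span_squarefree_monomial hG, ← e.symm.iSup_comp]
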